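/- Let δ > 0. Define B₊(x) = (2 sin²(πx)/π²)·[Σ_{k=0}^∞ 1/(x−k)² + 1/x] − 1 and B₋(x) = (2 sin²(πx)/π²)·[Σ_{k=1}^∞ 1/(x−k)² + 1/x] − 1 (each extended continuously across its removable singularities), and set φ₊(x) = ½ B₊(δ+x) + ½ B₊(δ−x) and φ₋(x) = ½ B₋(δ+x) + ½ B₋(δ−x). Then φ₊ and φ₋ are Lebesgue integrable on ℝ, and ∫_ℝ φ₊(x) dx = 2δ + 1 and ∫_ℝ φ₋(x) dx = 2δ − 1. -/

import Mathlib

open Classical in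
/-- The Beurling–Selberg majorant building block
`B₊(x) = (2 sin²(πx)/π²)(Σ_{k=0}^∞ 1/(x-k)² + 1/x) - 1`, extended continuously across the
removable singularities at the nonnegative integers (where its value is `1`). -/
noncomputable def Bplus (x : ℝ) : ℝ :=
  if ∃ n : ℕ, x = (n : ℝ) then 1
  else 2 * Real.sin (Real.pi * x) ^ 2 / Real.pi ^ 2 *
    ((∑' k : ℕ, 1 / (x - (k : ℝ)) ^ 2) + 1 / x) - 1

open Classical in
/-- The Beurling–Selberg minorant building block
`B₋(x) = (2 sin²(πx)/π²)(Σ_{k=1}^∞ 1/(x-k)² + 1/x) - 1`, extended continuously across the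
removable singularities at the positive integers (where its value is `1`); at `x = 0` the
formula itself is continuous with value `-1` (in Lean `1/0 = 0`). -/
noncomputable def Bminus (x : ℝ) : ℝ :=
  if ∃ n : ℕ, 0 < n ∧ x = (n : ℝ) then 1
  else 2 * Real.sin (Real.pi * x) ^ 2 / Real.pi ^ 2 *
    ((∑' k : ℕ, 1 / (x - ((k : ℝ) + 1)) ^ 2) + 1 / x) - 1

/-- The Beurling–Selberg majorant `φ₊(x) = ½ B₊(δ+x) + ½ B₊(δ-x)` of `1_{[-δ,δ]}`. -/
noncomputable def phiPlus (δ x : ℝ) : ℝ := Bplus (δ + x) / 2 + Bplus (δ - x) / 2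

/-- The Beurling–Selberg minorant `φ₋(x) = ½ B₋(δ+x) + ½ B₋(δ-x)` of `1_{(-δ,δ)}`. -/
noncomputable def phiMinus (δ x : ℝ) : ℝ := Bminus (δ + x) / 2 + Bminus (δ - x) / 2

/-!
Everything rests on Euler's identity `∑_{n ∈ ℤ} (x + n)⁻² = π² / sin² (π x)` for `x ∉ ℤ`, proved
by Herglotz's trick: the difference of the two sides is `1`-periodic, even, bounded off the
integers and satisfies `4 f x = f (x / 2) + f ((x + 1) / 2)`, so iterating gives `f = 0`.

Consequently the Fejér kernel `K x = 2 sin² (π x) / (π x)²` has periodisation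
`∑_{n ∈ ℤ} K (x + n) = 2`, hence `∫ K = 2`. Off the integers the identity also gives
`0 ≤ B₊ - sgn ≤ K` and `(B₊ - sgn) x + (B₊ - sgn) (-x) = K x`, hence `∫ (B₊ - sgn) = 1`.
Finally `φ₊` is the average of two translates of `B₊ - sgn` plus a step function of integral
`2 δ`, and `φ₋ δ = -φ₊ (-δ)` because `B₋ x = -B₊ (-x)`.
-/

open Real Set MeasureTheory Filter Topology

lemma Antitone.hasSum_sub_succ {f : ℕ → ℝ} {l : ℝ} (hf : Antitone f)
    (hl : Tendsto f atTop (𝓝 l)) : HasSum (fun k ↦ f k - f (k + 1)) (f 0 - l) := by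
  rw [hasSum_iff_tendsto_nat_of_nonneg fun k ↦ sub_nonneg.2 (hf k.le_succ)]
  simp_rw [Finset.sum_range_sub']
  exact tendsto_const_nhds.sub hl

/-- The Hurwitz zeta value `ζ(2, x)`; for `x ∈ -ℕ` the singular term is `1 / 0 = 0`. -/
noncomputable def invSqSum (x : ℝ) : ℝ := ∑' k : ℕ, 1 / (x + k) ^ 2

lemma summable_one_div_add_sq (x : ℝ) : Summable fun k : ℕ ↦ 1 / (x + k) ^ 2 := by
  simpa [sq_abs, add_comm] using (summable_one_div_nat_add_rpow x 2).2 one_lt_two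

lemma invSqSum_half_add_invSqSum_half (x : ℝ) :
    invSqSum (x / 2) + invSqSum ((x + 1) / 2) = 4 * invSqSum x := by
  set f : ℕ → ℝ := fun m ↦ 4 * (1 / (x + m) ^ 2)
  have hs : Summable f := (summable_one_div_add_sq x).mul_left 4
  rw [invSqSum, invSqSum, invSqSum, ← tsum_mul_left,
    ← tsum_even_add_odd (f := f) (hs.comp_injective (mul_right_injective₀ two_ne_zero))
      (hs.comp_injective fun a b h ↦ by simpa using h)]
  congr 1 <;> refine tsum_congr fun k ↦ ?_ <;> simp only [f] <;> push_cast
  · rw [show x / 2 + k = (x + 2 * k) / 2 by ring, div_pow, one_div_div]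
    ring
  · rw [show (x + 1) / 2 + k = (x + (2 * k + 1)) / 2 by ring, div_pow, one_div_div]
    ring

lemma invSqSum_nonneg (x : ℝ) : 0 ≤ invSqSum x := tsum_nonneg fun _ ↦ by positivity

lemma invSqSum_eq_add (x : ℝ) : invSqSum x = 1 / x ^ 2 + invSqSum (x + 1) := by
  rw [invSqSum, (summable_one_div_add_sq x).tsum_eq_zero_add, invSqSum]
  simp [add_assoc, add_comm (1 : ℝ)]

lemma hasSum_one_div_sub_one_div_succ {a : ℝ} (ha : 0 < a) :
    HasSum (fun k : ℕ ↦ 1 / (a + k) - 1 / (a + k + 1)) (1 / a) := by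
  have hanti : Antitone fun k : ℕ ↦ 1 / (a + k) := fun m n hmn ↦
    one_div_le_one_div_of_le (by positivity) (by gcongr)
  have hlim : Tendsto (fun k : ℕ ↦ 1 / (a + k)) atTop (𝓝 0) := by
    simp_rw [one_div]
    exact (tendsto_atTop_add_const_left _ a tendsto_natCast_atTop_atTop).inv_tendsto_atTop
  convert hanti.hasSum_sub_succ hlim using 1
  · ext k; push_cast; ring_nf
  · simp

lemma invSqSum_add_one_le {a : ℝ} (ha : 0 < a) : invSqSum (a + 1) ≤ 1 / a := by
  refine hasSum_le (fun k ↦ ?_) (summable_one_div_add_sq _).hasSum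
    (hasSum_one_div_sub_one_div_succ ha)
  have hk : 0 < a + k := by positivity
  rw [div_sub_div _ _ hk.ne' (by positivity), div_le_div_iff₀ (by positivity) (by positivity)]
  nlinarith

lemma one_div_add_one_le_invSqSum {a : ℝ} (ha : 0 < a) : 1 / (a + 1) ≤ invSqSum (a + 1) := by
  refine hasSum_le (fun k ↦ ?_) (hasSum_one_div_sub_one_div_succ (by positivity))
    (summable_one_div_add_sq _).hasSum
  have hk : 0 < a + 1 + k := by positivity
  rw [div_sub_div _ _ hk.ne' (by positivity), div_le_div_iff₀ (by positivity) (by positivity)]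
  nlinarith

lemma invSqSum_le_six {b : ℝ} (hb : 1 / 2 ≤ b) : invSqSum b ≤ 6 := by
  have hb' : 1 / b ≤ 2 := by rw [div_le_iff₀ (by linarith)]; linarith
  have h := invSqSum_add_one_le (a := b) (by linarith)
  rw [invSqSum_eq_add b, ← one_div_pow]
  nlinarith [one_div_pos.2 (show 0 < b by linarith)]

lemma hasSum_int_one_div_add_sq (x : ℝ) :
    HasSum (fun n : ℤ ↦ 1 / (x + n) ^ 2) (invSqSum x + invSqSum (1 - x)) := by
  refine HasSum.of_nat_of_neg_add_one ?_ ?_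
  · exact_mod_cast (summable_one_div_add_sq x).hasSum
  · refine ((summable_one_div_add_sq (1 - x)).hasSum).congr_fun fun n ↦ ?_
    push_cast
    ring

lemma eqOn_zero_of_four_mul_eq_add {f : ℝ → ℝ} {s : Set ℝ} {C : ℝ}
    (hs : ∀ x ∈ s, x / 2 ∈ s ∧ (x + 1) / 2 ∈ s) (hC : ∀ x ∈ s, |f x| ≤ C)
    (hf : ∀ x ∈ s, 4 * f x = f (x / 2) + f ((x + 1) / 2)) : EqOn f 0 s := by
  have hdecay : ∀ n : ℕ, ∀ x ∈ s, |f x| ≤ C / 2 ^ n := by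
    intro n
    induction n with
    | zero => simpa using hC
    | succ n ih =>
      intro x hx
      have h := abs_add_le (f (x / 2)) (f ((x + 1) / 2))
      rw [← hf x hx, abs_mul, abs_of_pos four_pos] at h
      rw [pow_succ, ← div_div]
      linarith [ih _ (hs x hx).1, ih _ (hs x hx).2]
  intro x hx
  have hlim : Tendsto (fun n : ℕ ↦ C / 2 ^ n) atTop (𝓝 0) :=
    tendsto_const_nhds.div_atTop (tendsto_pow_atTop_atTop_of_one_lt one_lt_two)
  exact abs_nonpos_iff.1 (ge_of_tendsto' hlim fun n ↦ hdecay n x hx)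

lemma Function.Periodic.abs_le_of_even {f : ℝ → ℝ} {C : ℝ} (hp : Periodic f 1)
    (he : f.Even) (hC : ∀ y ∈ Ioc (0 : ℝ) (1 / 2), |f y| ≤ C) {x : ℝ}
    (hx : x ∉ range ((↑) : ℤ → ℝ)) : |f x| ≤ C := by
  have hfract : f (Int.fract x) = f x := by
    rw [← Int.self_sub_floor]
    simpa only [mul_one] using hp.sub_int_mul_eq ⌊x⌋
  have h0 : 0 < Int.fract x :=
    (Int.fract_nonneg x).lt_of_ne (Ne.symm (mt Int.fract_eq_zero_iff.1 hx))
  have h1 := Int.fract_lt_one x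
  rcases le_or_gt (Int.fract x) (1 / 2) with h | h
  · rw [← hfract]
    exact hC _ ⟨h0, h⟩
  · rw [← hfract, ← he, ← hp.sub_eq']
    exact hC _ ⟨by linarith, by linarith⟩

lemma sin_pi_mul_ne_zero_of_notMem {x : ℝ} (hx : x ∉ range ((↑) : ℤ → ℝ)) :
    sin (π * x) ≠ 0 := by
  intro h
  obtain ⟨n, hn⟩ := sin_eq_zero_iff.1 h
  exact hx ⟨n, mul_left_cancel₀ pi_ne_zero (by linarith)⟩

lemma neg_notMem_range_intCast {x : ℝ} (hx : x ∉ range ((↑) : ℤ → ℝ)) :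
    -x ∉ range ((↑) : ℤ → ℝ) :=
  fun ⟨m, hm⟩ ↦ hx ⟨-m, by push_cast; linarith⟩

lemma one_div_sin_sq_le {t : ℝ} (h0 : 0 < t) (h1 : t ≤ π / 2) :
    1 / sin t ^ 2 ≤ 1 + 1 / t ^ 2 := by
  have hcos0 : 0 ≤ cos t := cos_nonneg_of_neg_pi_div_two_le_of_le (by linarith) h1
  have hcos : cos t ^ 2 ≤ 1 / (t ^ 2 + 1) := by
    calc cos t ^ 2 ≤ (1 / √(t ^ 2 + 1)) ^ 2 := by
          gcongr
          exact cos_le_one_div_sqrt_sq_add_one (by linarith [pi_pos]) (by linarith [pi_pos])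
      _ = 1 / (t ^ 2 + 1) := by rw [div_pow, sq_sqrt (by positivity), one_pow]
  have hsin : 0 < sin t := sin_pos_of_pos_of_lt_pi h0 (by linarith [pi_pos])
  have key : t ^ 2 ≤ sin t ^ 2 * (t ^ 2 + 1) := by
    rw [le_div_iff₀ (by positivity)] at hcos
    nlinarith [sin_sq_add_cos_sq t]
  rw [show 1 + 1 / t ^ 2 = (t ^ 2 + 1) / t ^ 2 by field_simp,
    div_le_div_iff₀ (by positivity) (by positivity)]
  linarith

lemma pi_sq_div_sin_sq_duplication {x : ℝ} (hx : sin (π * x) ≠ 0) :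
    π ^ 2 / sin (π * (x / 2)) ^ 2 + π ^ 2 / sin (π * ((x + 1) / 2)) ^ 2 =
      4 * (π ^ 2 / sin (π * x) ^ 2) := by
  rw [show π * ((x + 1) / 2) = π * (x / 2) + π / 2 by ring, sin_add_pi_div_two,
    show π * x = 2 * (π * (x / 2)) by ring, sin_two_mul] at *
  have hpyth := sin_sq_add_cos_sq (π * (x / 2))
  set s := sin (π * (x / 2))
  set c := cos (π * (x / 2))
  have hs : s ≠ 0 := fun h ↦ hx (by simp [h])
  have hc : c ≠ 0 := fun h ↦ hx (by simp [h])
  field_simp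
  linear_combination 4 * hpyth

noncomputable def cosecSqDefect (x : ℝ) : ℝ :=
  invSqSum x + invSqSum (1 - x) - π ^ 2 / sin (π * x) ^ 2

lemma cosecSqDefect_periodic : Function.Periodic cosecSqDefect 1 := fun x ↦ by
  have h1 := invSqSum_eq_add x
  have h2 := invSqSum_eq_add (-x)
  rw [neg_sq, neg_add_eq_sub] at h2
  rw [cosecSqDefect, cosecSqDefect, mul_add, mul_one, sin_add_pi, neg_sq,
    show 1 - (x + 1) = -x by ring]
  linarith

lemma cosecSqDefect_even : cosecSqDefect.Even := fun x ↦ by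
  have h1 := invSqSum_eq_add x
  have h2 := invSqSum_eq_add (-x)
  rw [neg_sq, neg_add_eq_sub] at h2
  rw [cosecSqDefect, cosecSqDefect, mul_neg, sin_neg, neg_sq, sub_neg_eq_add, add_comm 1 x]
  linarith

lemma four_mul_cosecSqDefect {x : ℝ} (hx : sin (π * x) ≠ 0) :
    4 * cosecSqDefect x = cosecSqDefect (x / 2) + cosecSqDefect ((x + 1) / 2) := by
  have h1 := invSqSum_half_add_invSqSum_half x
  have h2 := invSqSum_half_add_invSqSum_half (1 - x)
  have h3 := pi_sq_div_sin_sq_duplication hx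
  rw [show (1 - x + 1) / 2 = 1 - x / 2 by ring] at h2
  simp only [cosecSqDefect, show 1 - (x + 1) / 2 = (1 - x) / 2 by ring]
  linarith

lemma abs_cosecSqDefect_le {y : ℝ} (hy : y ∈ Ioc (0 : ℝ) (1 / 2)) :
    |cosecSqDefect y| ≤ 12 + π ^ 2 := by
  obtain ⟨h0, h1⟩ := hy
  have hsin : 0 < sin (π * y) := sin_pos_of_pos_of_lt_pi (by positivity) (by nlinarith [pi_pos])
  -- the poles `1 / y ^ 2` of `invSqSum y` and of `π ^ 2 / sin (π * y) ^ 2` cancel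
  have hlow : 1 / y ^ 2 ≤ π ^ 2 / sin (π * y) ^ 2 := by
    calc 1 / y ^ 2 = π ^ 2 / (π * y) ^ 2 := by field_simp
      _ ≤ π ^ 2 / sin (π * y) ^ 2 := by
        gcongr
        exact sin_le (by positivity)
  have hup : π ^ 2 / sin (π * y) ^ 2 ≤ π ^ 2 + 1 / y ^ 2 := by
    calc π ^ 2 / sin (π * y) ^ 2 = π ^ 2 * (1 / sin (π * y) ^ 2) := by ring
      _ ≤ π ^ 2 * (1 + 1 / (π * y) ^ 2) :=
        mul_le_mul_of_nonneg_left (one_div_sin_sq_le (by positivity) (by nlinarith [pi_pos]))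
          (by positivity)
      _ = π ^ 2 + 1 / y ^ 2 := by field_simp
  have hsplit := invSqSum_eq_add y
  have h₁ := invSqSum_nonneg (y + 1)
  have h₂ := invSqSum_nonneg (1 - y)
  have h₃ := invSqSum_le_six (b := y + 1) (by linarith)
  have h₄ := invSqSum_le_six (b := 1 - y) (by linarith)
  rw [cosecSqDefect, abs_le]
  constructor <;> linarith

theorem invSqSum_add_invSqSum_one_sub {x : ℝ} (hx : x ∉ range ((↑) : ℤ → ℝ)) :
    invSqSum x + invSqSum (1 - x) = π ^ 2 / sin (π * x) ^ 2 := by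
  have hs : ∀ y ∈ (range ((↑) : ℤ → ℝ))ᶜ, y / 2 ∈ (range ((↑) : ℤ → ℝ))ᶜ ∧
      (y + 1) / 2 ∈ (range ((↑) : ℤ → ℝ))ᶜ := fun y hy ↦
    ⟨fun ⟨m, hm⟩ ↦ hy ⟨2 * m, by push_cast; linarith⟩,
      fun ⟨m, hm⟩ ↦ hy ⟨2 * m - 1, by push_cast; linarith⟩⟩
  have h := eqOn_zero_of_four_mul_eq_add hs
    (fun y hy ↦ cosecSqDefect_periodic.abs_le_of_even cosecSqDefect_even
      (fun _ ↦ abs_cosecSqDefect_le) hy)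
    (fun y hy ↦ four_mul_cosecSqDefect (sin_pi_mul_ne_zero_of_notMem hy)) hx
  simpa [cosecSqDefect, sub_eq_zero] using h

noncomputable def sinSqWeight (x : ℝ) : ℝ := 2 * sin (π * x) ^ 2 / π ^ 2

lemma sinSqWeight_nonneg (x : ℝ) : 0 ≤ sinSqWeight x := by
  unfold sinSqWeight
  positivity

lemma sinSqWeight_neg (x : ℝ) : sinSqWeight (-x) = sinSqWeight x := by
  rw [sinSqWeight, sinSqWeight, mul_neg, sin_neg, neg_sq]

lemma sinSqWeight_add_intCast (x : ℝ) (n : ℤ) : sinSqWeight (x + n) = sinSqWeight x := by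
  rw [sinSqWeight, sinSqWeight, mul_add, mul_comm π (n : ℝ), sin_add_int_mul_pi, ← sq_abs,
    abs_mul, abs_neg_one_zpow, one_mul, sq_abs]

lemma sinSqWeight_le_one (x : ℝ) : sinSqWeight x ≤ 1 := by
  rw [sinSqWeight, div_le_one (by positivity)]
  nlinarith [sin_sq_le_one (π * x), pi_gt_three]

lemma sinSqWeight_le_two_mul_sq (x : ℝ) : sinSqWeight x ≤ 2 * x ^ 2 := by
  rw [sinSqWeight, div_le_iff₀ (by positivity)]
  nlinarith [sin_sq_le_sq (x := π * x)]

lemma sinSqWeight_mul_eq_two {x : ℝ} (hx : x ∉ range ((↑) : ℤ → ℝ)) :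
    sinSqWeight x * (invSqSum x + invSqSum (1 - x)) = 2 := by
  have := sin_pi_mul_ne_zero_of_notMem hx
  rw [invSqSum_add_invSqSum_one_sub hx, sinSqWeight]
  field_simp

noncomputable def fejerKernel (x : ℝ) : ℝ := sinSqWeight x / x ^ 2

lemma fejerKernel_nonneg (x : ℝ) : 0 ≤ fejerKernel x :=
  div_nonneg (sinSqWeight_nonneg x) (sq_nonneg x)

lemma fejerKernel_neg (x : ℝ) : fejerKernel (-x) = fejerKernel x := by
  rw [fejerKernel, fejerKernel, sinSqWeight_neg, neg_sq]

lemma measurable_fejerKernel : Measurable fejerKernel := by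
  unfold fejerKernel sinSqWeight
  fun_prop

lemma fejerKernel_le (x : ℝ) : fejerKernel x ≤ 3 * (1 + x ^ 2)⁻¹ := by
  rw [← div_eq_mul_inv, le_div_iff₀ (by positivity)]
  rcases eq_or_ne x 0 with rfl | hx
  · simp [fejerKernel]
  have hK : fejerKernel x ≤ 2 := by
    rw [fejerKernel, div_le_iff₀ (by positivity)]
    exact sinSqWeight_le_two_mul_sq x
  have hKx : fejerKernel x * x ^ 2 = sinSqWeight x := div_mul_cancel₀ _ (pow_ne_zero 2 hx)
  linarith [sinSqWeight_le_one x]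

lemma integrable_fejerKernel : Integrable fejerKernel :=
  (integrable_inv_one_add_sq.const_mul 3).mono' measurable_fejerKernel.aestronglyMeasurable
    (ae_of_all _ fun x ↦ (Real.norm_of_nonneg (fejerKernel_nonneg x)).trans_le (fejerKernel_le x))

lemma tsum_fejerKernel_add_intCast {x : ℝ} (hx : x ∉ range ((↑) : ℤ → ℝ)) :
    ∑' n : ℤ, fejerKernel (x + n) = 2 := by
  have h : ∀ n : ℤ, fejerKernel (x + n) = sinSqWeight x * (1 / (x + n) ^ 2) := fun n ↦ by
    rw [fejerKernel, sinSqWeight_add_intCast, mul_one_div]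
  rw [tsum_congr h, tsum_mul_left, (hasSum_int_one_div_add_sq x).tsum_eq,
    sinSqWeight_mul_eq_two hx]

lemma MeasureTheory.Integrable.integral_eq_setIntegral_tsum_add_intCast {E : Type*}
    [NormedAddCommGroup E] [NormedSpace ℝ E] {f : ℝ → E} (hf : Integrable f) :
    ∫ x, f x = ∫ x in Ioc (0 : ℝ) 1, ∑' n : ℤ, f (x + n) := by
  have hsum := hf.hasSum_intervalIntegral_comp_add_int
  have hsum_norm := hf.norm.hasSum_intervalIntegral_comp_add_int
  simp only [intervalIntegral.integral_of_le zero_le_one] at hsum hsum_norm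
  rw [← hsum.tsum_eq]
  exact integral_tsum_of_summable_integral_norm
    (fun n ↦ (hf.comp_add_right (n : ℝ)).integrableOn) hsum_norm.summable

lemma notMem_range_intCast_of_mem_Ioo {x : ℝ} (hx : x ∈ Ioo (0 : ℝ) 1) :
    x ∉ range ((↑) : ℤ → ℝ) := fun h ↦
  hx.1.ne' ((Int.fract_eq_self.2 ⟨hx.1.le, hx.2⟩).symm.trans (Int.fract_eq_zero_iff.2 h))

lemma integral_fejerKernel : ∫ x, fejerKernel x = 2 := by
  rw [integrable_fejerKernel.integral_eq_setIntegral_tsum_add_intCast,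
    integral_Ioc_eq_integral_Ioo,
    setIntegral_congr_fun measurableSet_Ioo fun x hx ↦
      tsum_fejerKernel_add_intCast (notMem_range_intCast_of_mem_Ioo hx)]
  simp

lemma Bplus_eq_of_notMem {x : ℝ} (hx : x ∉ range ((↑) : ℤ → ℝ)) :
    Bplus x = sinSqWeight x * (invSqSum (-x) + 1 / x) - 1 := by
  have hnat : ¬∃ n : ℕ, x = n := fun ⟨n, hn⟩ ↦ hx ⟨n, by simp [hn]⟩
  have hsum : ∑' k : ℕ, 1 / (x - k) ^ 2 = invSqSum (-x) := tsum_congr fun k ↦ by ring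
  rw [Bplus, if_neg hnat, hsum, sinSqWeight]

lemma Bminus_eq_of_notMem {x : ℝ} (hx : x ∉ range ((↑) : ℤ → ℝ)) :
    Bminus x = sinSqWeight x * (invSqSum (1 - x) + 1 / x) - 1 := by
  have hnat : ¬∃ n : ℕ, 0 < n ∧ x = n := fun ⟨n, _, hn⟩ ↦ hx ⟨n, by simp [hn]⟩
  have hsum : ∑' k : ℕ, 1 / (x - (k + 1)) ^ 2 = invSqSum (1 - x) :=
    tsum_congr fun k ↦ by ring
  rw [Bminus, if_neg hnat, hsum, sinSqWeight]

lemma Bplus_intCast (m : ℤ) : Bplus m = if 0 ≤ m then 1 else -1 := by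
  rcases le_or_gt 0 m with hm | hm
  · lift m to ℕ using hm
    simp [Bplus]
  · have hnat : ¬∃ n : ℕ, (m : ℝ) = n := fun ⟨n, hn⟩ ↦ by
      have : (m : ℝ) < 0 := by exact_mod_cast hm
      linarith [n.cast_nonneg (α := ℝ)]
    simp [Bplus, hnat, hm.not_ge, mul_comm π, sin_int_mul_pi]

lemma Bminus_intCast (m : ℤ) : Bminus m = if 0 < m then 1 else -1 := by
  rcases le_or_gt m 0 with hm | hm
  · have hnat : ¬∃ n : ℕ, 0 < n ∧ (m : ℝ) = n := fun ⟨n, hn, hmn⟩ ↦ by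
      have : (m : ℝ) ≤ 0 := by exact_mod_cast hm
      have : (1 : ℝ) ≤ n := by exact_mod_cast hn
      linarith
    simp [Bminus, hnat, hm.not_gt, mul_comm π, sin_int_mul_pi]
  · lift m to ℕ using hm.le
    simp only [Nat.cast_pos] at hm
    simp [Bminus, hm]

lemma Bminus_eq_neg_Bplus_neg (x : ℝ) : Bminus x = -Bplus (-x) := by
  by_cases hx : x ∈ range ((↑) : ℤ → ℝ)
  · obtain ⟨m, rfl⟩ := hx
    rw [← Int.cast_neg, Bminus_intCast, Bplus_intCast]
    split_ifs <;> first | omega | norm_num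
  · have h := sinSqWeight_mul_eq_two hx
    rw [Bminus_eq_of_notMem hx, Bplus_eq_of_notMem (neg_notMem_range_intCast hx),
      sinSqWeight_neg, neg_neg]
    linear_combination h

lemma measurable_Bplus : Measurable Bplus := by
  have hnat : MeasurableSet {x : ℝ | ∃ n : ℕ, x = n} := by
    refine ((countable_range ((↑) : ℕ → ℝ)).mono ?_).measurableSet
    rintro x ⟨n, hn⟩
    exact ⟨n, hn.symm⟩
  refine Measurable.ite hnat measurable_const ?_
  have hsum : Measurable fun x : ℝ ↦ ∑' k : ℕ, 1 / (x - k) ^ 2 :=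
    Measurable.tsum fun k ↦ by fun_prop
  fun_prop

noncomputable def rightSign (x : ℝ) : ℝ := if 0 ≤ x then 1 else -1

noncomputable def BplusGap (x : ℝ) : ℝ := Bplus x - rightSign x

lemma measurable_BplusGap : Measurable BplusGap :=
  measurable_Bplus.sub (Measurable.ite measurableSet_Ici measurable_const measurable_const)

lemma BplusGap_add_BplusGap_neg {x : ℝ} (hx : x ∉ range ((↑) : ℤ → ℝ)) :
    BplusGap x + BplusGap (-x) = fejerKernel x := by
  have hx0 : x ≠ 0 := fun h ↦ hx ⟨0, by simp [h]⟩
  have hnx := neg_notMem_range_intCast hx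
  have hsign : rightSign x + rightSign (-x) = 0 := by
    rcases hx0.lt_or_gt with h | h <;> simp [rightSign, h.le, h.not_ge]
  have h1 := invSqSum_eq_add (-x)
  rw [neg_sq, neg_add_eq_sub] at h1
  rw [BplusGap, BplusGap, Bplus_eq_of_notMem hx, Bplus_eq_of_notMem hnx, sinSqWeight_neg,
    neg_neg, fejerKernel]
  linear_combination sinSqWeight x * h1 + sinSqWeight_mul_eq_two hx - hsign

lemma BplusGap_of_pos {x : ℝ} (hx : x ∉ range ((↑) : ℤ → ℝ)) (h0 : 0 < x) :
    BplusGap x = sinSqWeight x * (1 / x - invSqSum (x + 1)) := by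
  have h := sinSqWeight_mul_eq_two (neg_notMem_range_intCast hx)
  rw [sinSqWeight_neg, sub_neg_eq_add, add_comm 1 x] at h
  rw [BplusGap, Bplus_eq_of_notMem hx, rightSign, if_pos h0.le]
  linear_combination h

lemma BplusGap_mem_Icc_of_pos {x : ℝ} (hx : x ∉ range ((↑) : ℤ → ℝ)) (h0 : 0 < x) :
    BplusGap x ∈ Icc 0 (fejerKernel x) := by
  have hup := invSqSum_add_one_le h0
  have hlow := one_div_add_one_le_invSqSum h0
  have hstep : 1 / x - 1 / (x + 1) ≤ 1 / x ^ 2 := by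
    rw [div_sub_div _ _ h0.ne' (by positivity), div_le_div_iff₀ (by positivity) (by positivity)]
    nlinarith
  rw [BplusGap_of_pos hx h0, fejerKernel, div_eq_mul_one_div]
  exact ⟨mul_nonneg (sinSqWeight_nonneg x) (by linarith),
    mul_le_mul_of_nonneg_left (by linarith) (sinSqWeight_nonneg x)⟩

lemma BplusGap_mem_Icc {x : ℝ} (hx : x ∉ range ((↑) : ℤ → ℝ)) :
    BplusGap x ∈ Icc 0 (fejerKernel x) := by
  rcases lt_trichotomy x 0 with h | h | h
  · have hpos := BplusGap_mem_Icc_of_pos (neg_notMem_range_intCast hx) (neg_pos.2 h)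
    rw [fejerKernel_neg] at hpos
    have hsum := BplusGap_add_BplusGap_neg hx
    exact ⟨by linarith [hpos.2], by linarith [hpos.1]⟩
  · exact absurd ⟨0, by simp [h]⟩ hx
  · exact BplusGap_mem_Icc_of_pos hx h

lemma ae_notMem_range_intCast : ∀ᵐ x : ℝ, x ∉ range ((↑) : ℤ → ℝ) :=
  (countable_range _).ae_notMem volume

lemma integrable_BplusGap : Integrable BplusGap :=
  integrable_fejerKernel.mono' measurable_BplusGap.aestronglyMeasurable
    (ae_notMem_range_intCast.mono fun _ hx ↦
      (Real.norm_of_nonneg (BplusGap_mem_Icc hx).1).trans_le (BplusGap_mem_Icc hx).2)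

lemma integral_BplusGap : ∫ x, BplusGap x = 1 := by
  have hsum : ∫ x, (BplusGap x + BplusGap (-x)) = 2 := by
    rw [← integral_fejerKernel]
    exact integral_congr_ae (ae_notMem_range_intCast.mono fun _ ↦ BplusGap_add_BplusGap_neg)
  rw [integral_add integrable_BplusGap integrable_BplusGap.comp_neg,
    integral_neg_eq_self BplusGap] at hsum
  linarith

lemma rightSign_add_rightSign_div_two (δ x : ℝ) :
    (rightSign (δ + x) + rightSign (δ - x)) / 2 =
      (Icc (-δ) δ).indicator 1 x - (Ioo δ (-δ)).indicator 1 x := by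
  simp only [rightSign, indicator, mem_Icc, mem_Ioo, Pi.one_apply]
  split_ifs <;> grind

lemma phiPlus_eq (δ : ℝ) : phiPlus δ = fun x ↦ (BplusGap (δ + x) + BplusGap (δ - x)) / 2 +
    ((Icc (-δ) δ).indicator 1 x - (Ioo δ (-δ)).indicator 1 x) := by
  funext x
  rw [← rightSign_add_rightSign_div_two, phiPlus, BplusGap, BplusGap]
  ring

lemma integrable_BplusGap_average (δ : ℝ) :
    Integrable fun x ↦ (BplusGap (δ + x) + BplusGap (δ - x)) / 2 :=
  ((integrable_BplusGap.comp_add_left δ).add (integrable_BplusGap.comp_sub_left δ)).div_const 2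

lemma integral_BplusGap_average (δ : ℝ) :
    ∫ x, (BplusGap (δ + x) + BplusGap (δ - x)) / 2 = 1 := by
  rw [integral_div, integral_add (integrable_BplusGap.comp_add_left δ)
    (integrable_BplusGap.comp_sub_left δ), integral_add_left_eq_self BplusGap,
    integral_sub_left_eq_self BplusGap, integral_BplusGap]
  norm_num

lemma integrable_indicator_one {α : Type*} [MeasurableSpace α] {μ : Measure α} {s : Set α}
    (hs : MeasurableSet s) (hμs : μ s ≠ ⊤) : Integrable (s.indicator (1 : α → ℝ)) μ :=
  (integrableOn_const hμs).integrable_indicator hs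

lemma integrable_indicator_Icc_sub_indicator_Ioo (δ : ℝ) :
    Integrable fun x ↦ (Icc (-δ) δ).indicator (1 : ℝ → ℝ) x - (Ioo δ (-δ)).indicator 1 x :=
  (integrable_indicator_one measurableSet_Icc measure_Icc_lt_top.ne).sub
    (integrable_indicator_one measurableSet_Ioo measure_Ioo_lt_top.ne)

lemma integral_indicator_Icc_sub_indicator_Ioo (δ : ℝ) :
    ∫ x, ((Icc (-δ) δ).indicator (1 : ℝ → ℝ) x - (Ioo δ (-δ)).indicator 1 x) = 2 * δ := by
  rw [integral_sub (integrable_indicator_one measurableSet_Icc measure_Icc_lt_top.ne)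
      (integrable_indicator_one measurableSet_Ioo measure_Ioo_lt_top.ne),
    integral_indicator_one measurableSet_Icc, integral_indicator_one measurableSet_Ioo,
    Real.volume_real_Icc, Real.volume_real_Ioo, show δ - -δ = 2 * δ by ring,
    show -δ - δ = -(2 * δ) by ring, max_zero_sub_max_neg_zero_eq_self]

lemma integrable_phiPlus (δ : ℝ) : Integrable (phiPlus δ) := by
  rw [phiPlus_eq]
  exact (integrable_BplusGap_average δ).add (integrable_indicator_Icc_sub_indicator_Ioo δ)

lemma integral_phiPlus (δ : ℝ) : ∫ x, phiPlus δ x = 2 * δ + 1 := by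
  rw [phiPlus_eq, integral_add (integrable_BplusGap_average δ)
    (integrable_indicator_Icc_sub_indicator_Ioo δ), integral_BplusGap_average,
    integral_indicator_Icc_sub_indicator_Ioo]
  ring

lemma phiMinus_eq_neg_phiPlus_neg (δ : ℝ) : phiMinus δ = -phiPlus (-δ) := by
  funext x
  simp only [phiMinus, phiPlus, Pi.neg_apply, Bminus_eq_neg_Bplus_neg]
  rw [show -(δ + x) = -δ - x by ring, show -(δ - x) = -δ + x by ring]
  ring

theorem phiPlus_phiMinus_integral_general (δ : ℝ) :
    MeasureTheory.Integrable (phiPlus δ) ∧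
    MeasureTheory.Integrable (phiMinus δ) ∧
    (∫ x : ℝ, phiPlus δ x) = 2 * δ + 1 ∧
    (∫ x : ℝ, phiMinus δ x) = 2 * δ - 1 := by
  rw [phiMinus_eq_neg_phiPlus_neg]
  refine ⟨integrable_phiPlus δ, (integrable_phiPlus (-δ)).neg, integral_phiPlus δ, ?_⟩
  rw [integral_neg', integral_phiPlus]
  ring

/-- The Beurling–Selberg majorant/minorant `φ₊`, `φ₋` of the interval `[-δ,δ]`
are Lebesgue integrable on `ℝ` with `∫ φ₊ = 2δ + 1` and `∫ φ₋ = 2δ - 1`. -/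
theorem phiPlus_phiMinus_integral (δ : ℝ) (hδ : 0 < δ) :
    MeasureTheory.Integrable (phiPlus δ) ∧
    MeasureTheory.Integrable (phiMinus δ) ∧
    (∫ x : ℝ, phiPlus δ x) = 2 * δ + 1 ∧
    (∫ x : ℝ, phiMinus δ x) = 2 * δ - 1 :=
  phiPlus_phiMinus_integral_general δ
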